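/- Let f : X̃ → X be a harmonic morphism of finite graphs with X connected, and define f^* : ℤ^{V(X)} → ℤ^{V(X̃)} by f^*(v) = Σ_{ṽ ∈ f^{-1}(v)} d_f(ṽ)·ṽ. Then f^*(L_X(v)) = Σ_{ṽ ∈ f^{-1}(v)} L_{X̃}(ṽ) for every v ∈ V(X), and the composition f_* ∘ f^* acts on Jac(X) by multiplication by deg(f). -/

import Mathlib

open Finset

/-- Connectivity of a graph presented by half-edges: root map `r` and involution `ι`. -/
def HalfConn {V H : Type*} (r : H → V) (ι : H → H) : Prop :=
  ∀ u v : V, Relation.ReflTransGen (fun a b => ∃ h, r h = a ∧ r (ι h) = b) u v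

/-- The (half-edge) Laplacian matrix of a graph: the `(u,v)` entry is the coefficient of
`u` in `L(v) = Σ_{h ∈ T_v X} (v - r(ι h))`. -/
def halfLapMat {V H : Type*} [Fintype H] [DecidableEq V]
    (r : H → V) (ι : H → H) : Matrix V V ℤ :=
  Matrix.of fun u v => ∑ h : H,
    if r h = v then (if r h = u then 1 else 0) - (if r (ι h) = u then 1 else 0) else 0

/-- Degree (sum of coefficients) of a divisor, as a linear map. -/
def degHom (V : Type*) [Fintype V] : (V → ℤ) →ₗ[ℤ] ℤ where
  toFun d := ∑ v, d v
  map_add' x y := Finset.sum_add_distrib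
  map_smul' c x := by simp [Finset.mul_sum]

/-- Jacobian: degree-zero divisors modulo the image of (the linear map given by) `M`. -/
abbrev jacOfMat {V : Type*} [Fintype V] (M : Matrix V V ℤ) :=
  LinearMap.ker (degHom V) ⧸
    Submodule.comap (LinearMap.ker (degHom V)).subtype (LinearMap.range M.mulVecLin)

/-- Pushforward of divisors along a map of vertex sets: add up the chips in each fiber. -/
def pushV {V W : Type*} [Fintype V] [DecidableEq W] (p : V → W) (d : V → ℤ) : W → ℤ :=
  fun w => ∑ v ∈ Finset.univ.filter (fun v => p v = w), d v

/-- The divisor consisting of a single chip at `v`. -/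
def indic {α : Type*} [DecidableEq α] (v : α) : α → ℤ := fun u => if u = v then 1 else 0

/-! For an involution `ι`, the `(u, v)` entry of the half-edge Laplacian is
`#{h ∈ T_u | r h = v} - #{h ∈ T_u | r (ι h) = v}`, so summing it over a fibre of `fV` counts
half-edges at `u` whose root, resp. opposite root, lies over `v`. Harmonicity says that every
half-edge of `X` at `fV u` has exactly `d u` preimages at `u`; this turns those counts on `X̃`
into `d u` times the corresponding counts on `X`, i.e. into `d u · L_X(fV u, v)`. For the second
identity, `f_* f^* D (v) = (Σ_{fV vt = v} d vt) · D v = deg(f) · D v`. -/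

lemma indic_eq_single {α : Type*} [DecidableEq α] (v : α) : indic v = Pi.single v 1 := by
  ext u
  simp [indic, Pi.single_apply]

lemma Matrix.mulVec_indic {m n : Type*} [Fintype n] [DecidableEq n] (M : Matrix m n ℤ) (j : n) :
    M.mulVec (indic j) = M.col j := by
  rw [indic_eq_single, Matrix.mulVec_single_one]

section HalfEdgeGraph

variable {V H : Type*} [Fintype H] [DecidableEq V] {r : H → V} {ι : H → H}

lemma halfLapMat_apply_of_involutive (hι : Function.Involutive ι) (u v : V) :
    halfLapMat r ι u v = (#{h | r h = u ∧ r h = v} : ℤ) - #{h | r h = u ∧ r (ι h) = v} := by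
  have hswap : (#{h | r h = v ∧ r (ι h) = u} : ℤ) = #{h | r h = u ∧ r (ι h) = v} := by
    simp only [natCast_card_filter]
    rw [← Equiv.sum_comp (hι.toPerm ι)]
    simp [hι _, and_comm]
  rw [← hswap]
  simp only [halfLapMat, Matrix.of_apply, natCast_card_filter, ← sum_sub_distrib]
  refine sum_congr rfl fun h _ => ?_
  grind

lemma sum_fiber_halfLapMat_apply_of_involutive {W : Type*} [Fintype V] [DecidableEq W]
    (hι : Function.Involutive ι) (p : V → W) (u : V) (w : W) :
    ∑ v ∈ univ.filter (fun v => p v = w), halfLapMat r ι u v =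
      (#{h | r h = u ∧ p (r h) = w} : ℤ) - #{h | r h = u ∧ p (r (ι h)) = w} := by
  have fiberwise (g : H → V) :
      ∑ v ∈ univ.filter (fun v => p v = w), (#{h | r h = u ∧ g h = v} : ℤ) =
        #{h | r h = u ∧ p (g h) = w} := by
    have := sum_card_fiberwise_eq_card_filter (univ.filter (r · = u))
      (univ.filter (fun v => p v = w)) g
    simp only [filter_filter, mem_filter, mem_univ, true_and] at this
    exact_mod_cast this
  simp only [halfLapMat_apply_of_involutive hι, sum_sub_distrib, fiberwise]

end HalfEdgeGraph

lemma card_filter_comp_eq_mul_of_harmonic {V1 H1 V2 H2 : Type*} [Fintype H1] [Fintype H2]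
    [DecidableEq V1] [DecidableEq V2] [DecidableEq H2]
    {r1 : H1 → V1} {r2 : H2 → V2} {fV : V1 → V2} {fH : H1 → H2}
    (hr : ∀ h, fV (r1 h) = r2 (fH h)) {d : V1 → ℤ}
    (harm : ∀ (vt : V1) (h : H2), r2 h = fV vt →
      d vt = #{h' | r1 h' = vt ∧ fH h' = h})
    (u : V1) (P : H2 → Prop) [DecidablePred P] :
    (#{h | r1 h = u ∧ P (fH h)} : ℤ) = d u * #{h | r2 h = fV u ∧ P h} := by
  have hmaps : ((univ.filter (fun h => r1 h = u ∧ P (fH h)) : Finset H1) : Set H1).MapsTo fH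
      (univ.filter (fun h => r2 h = fV u ∧ P h)) := by
    intro h hh
    simp only [coe_filter, mem_univ, true_and, Set.mem_ofPred_eq] at hh
    simp [← hr, hh.1, hh.2]
  rw [card_eq_sum_card_fiberwise hmaps, Nat.cast_sum, mul_comm, ← nsmul_eq_mul, ← sum_const]
  refine sum_congr rfl fun h hh => ?_
  rw [harm u h (mem_filter.mp hh).2.1, filter_filter]
  congr 2
  ext h'
  simp only [mem_filter, mem_univ, true_and]
  grind

lemma pushV_mul_comp {V W : Type*} [Fintype V] [DecidableEq W] (p : V → W) (d : V → ℤ)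
    (D : W → ℤ) : pushV p (fun x => d x * D (p x)) = pushV p d * D := by
  ext w
  simp only [pushV, Pi.mul_apply, sum_mul]
  exact sum_congr rfl fun x hx => by rw [(mem_filter.mp hx).2]

theorem stmt12_general {V1 H1 V2 H2 : Type*} [Fintype V1] [Fintype H1] [Fintype V2] [Fintype H2]
    [DecidableEq V1] [DecidableEq V2] [DecidableEq H1] [DecidableEq H2]
    (r1 : H1 → V1) (ι1 : H1 → H1) (hι1 : ∀ h, ι1 (ι1 h) = h)
    (r2 : H2 → V2) (ι2 : H2 → H2) (hι2 : ∀ h, ι2 (ι2 h) = h)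
    (fV : V1 → V2) (fH : H1 → H2)
    (hr : ∀ h, fV (r1 h) = r2 (fH h)) (hι : ∀ h, fH (ι1 h) = ι2 (fH h))
    (d : V1 → ℤ)
    (harm : ∀ (vt : V1) (h : H2), r2 h = fV vt →
      d vt = ((Finset.univ.filter (fun h' => r1 h' = vt ∧ fH h' = h)).card : ℤ))
    (Deg : ℤ) (hDeg : ∀ v : V2, ∑ vt ∈ Finset.univ.filter (fun vt => fV vt = v), d vt = Deg) :
    (∀ v : V2,
        (fun vt : V1 => d vt * ((halfLapMat r2 ι2).mulVec (indic v)) (fV vt)) =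
          fun u : V1 => ∑ vt ∈ Finset.univ.filter (fun vt => fV vt = v),
            ((halfLapMat r1 ι1).mulVec (indic vt)) u) ∧
    (∀ D : V2 → ℤ,
        pushV fV (fun vt : V1 => d vt * D (fV vt)) = Deg • D) := by
  refine ⟨fun v => funext fun u => ?_, fun D => ?_⟩
  · simp only [Matrix.mulVec_indic, Matrix.col_apply,
      sum_fiber_halfLapMat_apply_of_involutive hι1, halfLapMat_apply_of_involutive hι2, hr, hι,
      card_filter_comp_eq_mul_of_harmonic hr harm u (fun h => r2 h = v),
      card_filter_comp_eq_mul_of_harmonic hr harm u (fun h => r2 (ι2 h) = v), mul_sub]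
  · ext v
    rw [pushV_mul_comp, Pi.mul_apply, Pi.smul_apply, smul_eq_mul, pushV, hDeg]

/-- for a harmonic morphism `f : X̃ → X` with `X` connected,
`f^*(L_X(v)) = Σ_{vt ∈ f⁻¹(v)} L_{X̃}(vt)` for every vertex `v` of `X`, and the
composition `f_* ∘ f^*` is multiplication by the global degree `deg(f)` (hence acts on
`Jac(X)` as multiplication by `deg(f)`).  Here `f^*(D)(vt) = d_f(vt)·D(f(vt))`. -/
theorem stmt12 {V1 H1 V2 H2 : Type*} [Fintype V1] [Fintype H1] [Fintype V2] [Fintype H2]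
    [DecidableEq V1] [DecidableEq V2] [DecidableEq H1] [DecidableEq H2]
    (r1 : H1 → V1) (ι1 : H1 → H1) (hι1 : ∀ h, ι1 (ι1 h) = h)
    (r2 : H2 → V2) (ι2 : H2 → H2) (hι2 : ∀ h, ι2 (ι2 h) = h)
    (fV : V1 → V2) (fH : H1 → H2)
    (hr : ∀ h, fV (r1 h) = r2 (fH h)) (hι : ∀ h, fH (ι1 h) = ι2 (fH h))
    (d : V1 → ℤ)
    (harm : ∀ (vt : V1) (h : H2), r2 h = fV vt →
      d vt = ((Finset.univ.filter (fun h' => r1 h' = vt ∧ fH h' = h)).card : ℤ))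
    (hconn : HalfConn r2 ι2)
    (Deg : ℤ) (hDeg : ∀ v : V2, ∑ vt ∈ Finset.univ.filter (fun vt => fV vt = v), d vt = Deg) :
    (∀ v : V2,
        (fun vt : V1 => d vt * ((halfLapMat r2 ι2).mulVec (indic v)) (fV vt)) =
          fun u : V1 => ∑ vt ∈ Finset.univ.filter (fun vt => fV vt = v),
            ((halfLapMat r1 ι1).mulVec (indic vt)) u) ∧
    (∀ D : V2 → ℤ,
        pushV fV (fun vt : V1 => d vt * D (fV vt)) = Deg • D) :=
  stmt12_general r1 ι1 hι1 r2 ι2 hι2 fV fH hr hι d harm Deg hDeg
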